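/- arXiv:1804.09822 — 2 statements merged into one kernel-verified Lean document; each statement's English description precedes it below -/
import Mathlib

section
/- In an enriched CLNL model, there is an isomorphism !(A ⊸ B) ≅ F(𝒞(A, B)), where ! = F ∘ G. -/
open CategoryTheory MonoidalCategory MonoidalClosed

universe v u u'

/-- An enriched CLNL model: `V` cartesian closed (with its self-enrichment `𝒱`), a
`V`-symmetric monoidal closed category `𝒞` with `V`-copowers and underlying category `C`
(a symmetric monoidal closed category), and a `V`-adjunction `(− ⊙ I) ⊣ 𝒞(I,−)` whose
underlying adjunction `F ⊣ G` forms an LNL model.  The `V`-enrichment of `C` is recorded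
by the hom bifunctor `eHom : Cᵒᵖ ⥤ C ⥤ V` (so `𝒞(A,B) = (eHom.obj (op A)).obj B`),
and `G = 𝒞(I,−) = eHom.obj (op I)`. -/
structure EnrichedCLNLModel (V : Type u) [Category.{v} V] [CartesianMonoidalCategory V]
    [MonoidalClosed V]
    (C : Type u') [Category.{v} C] [MonoidalCategory C] [SymmetricCategory C]
    [MonoidalClosed C] where
  /-- the enriched hom of the `V`-category `𝒞` -/
  eHom : Cᵒᵖ ⥤ C ⥤ V
  /-- `C` is the underlying category of `𝒞`: hom-sets are global elements of hom-objects -/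
  homEquiv : ∀ A B : C, (A ⟶ B) ≃ ((𝟙_ V) ⟶ (eHom.obj (Opposite.op A)).obj B)
  homEquiv_pre : ∀ {A' A B : C} (g : A' ⟶ A) (f : A ⟶ B),
    homEquiv A' B (g ≫ f) = homEquiv A B f ≫ (eHom.map g.op).app B
  homEquiv_post : ∀ {A B B' : C} (f : A ⟶ B) (h : B ⟶ B'),
    homEquiv A B' (f ≫ h) = homEquiv A B f ≫ (eHom.obj (Opposite.op A)).map h
  /-- the enrichment of the closed structure of `𝒞`:
  `𝒞(X, A ⊸ B) ≅ 𝒞(A ⊗ X, B)`, naturally in `X` and `B` -/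
  closure : ∀ A : C,
    (eHom ⋙ (Functor.whiskeringLeft C C V).obj (ihom A)) ≅ ((tensorLeft A).op ⋙ eHom)
  /-- the `V`-copowers of `𝒞` -/
  copower : V → C → C
  copowerIso : ∀ (X : V) (A B : C),
    (eHom.obj (Opposite.op (copower X A))).obj B ≅
      (ihom X).obj ((eHom.obj (Opposite.op A)).obj B)
  /-- the left adjoint `F = (− ⊙ I)` -/
  F : V ⥤ C
  F_eq : ∀ X : V, F.obj X = copower X (𝟙_ C)
  Fbraided : letI : BraidedCategory V := .ofCartesianMonoidalCategory; F.Braided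
  Glax : (eHom.obj (Opposite.op (𝟙_ C))).LaxMonoidal
  /-- the underlying LNL adjunction `F ⊣ G` where `G = 𝒞(I,−)` -/
  adj : F ⊣ eHom.obj (Opposite.op (𝟙_ C))
  adjMonoidal : letI : BraidedCategory V := .ofCartesianMonoidalCategory
    letI : F.Braided := Fbraided; letI := Glax; adj.IsMonoidal

/-- In an enriched CLNL model, there is an isomorphism
`!(A ⊸ B) ≅ F(𝒞(A, B))`, where `! = F ∘ G` and `G = 𝒞(I,−)`. -/
theorem stmt7 {V : Type u} [Category.{v} V] [CartesianMonoidalCategory V] [MonoidalClosed V]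
    {C : Type u'} [Category.{v} C] [MonoidalCategory C] [SymmetricCategory C]
    [MonoidalClosed C] (M : EnrichedCLNLModel V C) (A B : C) :
    Nonempty (M.F.obj ((M.eHom.obj (Opposite.op (𝟙_ C))).obj ((ihom A).obj B)) ≅
      M.F.obj ((M.eHom.obj (Opposite.op A)).obj B)) := by
  refine ⟨M.F.mapIso (Iso.trans ?_ ((M.eHom.mapIso (Iso.op (ρ_ A)).symm).app B))⟩
  exact ((M.closure A).app (Opposite.op (𝟙_ C))).app B
end

section
/- In a model of the CLNL calculus with recursion (where the !-endofunctor is parametrically algebraically compact), the category C is pointed, with ⊥_A : I → A given by σ_{ε_A} ∘ γ_I, where γ_I : I → Ω_I is the anamorphism into the final coalgebra carrier of I ⊗ !(−) (hence of !(−) at unit parameter) and σ_{ε_A} : Ω_I → A is the catamorphism for the !-algebra ε_A : !A → A. In particular, h ∘ ⊥_A = ⊥_B for every h : A → B. -/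
open CategoryTheory CategoryTheory.Limits MonoidalCategory Functor

/-- An endofunctor `T` is algebraically compact if it has an initial algebra whose
structure map is an isomorphism and whose inverse is a final coalgebra. -/
def AlgebraicallyCompact {C : Type*} [Category C] (T : C ⥤ C) : Prop :=
  ∃ (Ω : Endofunctor.Algebra T) (s : Ω.a ⟶ T.obj Ω.a),
    Ω.str ≫ s = 𝟙 _ ∧ s ≫ Ω.str = 𝟙 _ ∧
    Nonempty (IsInitial Ω) ∧
    Nonempty (IsTerminal (Endofunctor.Coalgebra.mk Ω.a s : Endofunctor.Coalgebra T))

attribute [local instance] BraidedCategory.ofCartesianMonoidalCategory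

/-- In a model of the CLNL calculus with recursion (an LNL model
`F ⊣ G` with `! = F ∘ G` parametrically algebraically compact, i.e. `A ⊗ !(−)` is
algebraically compact for every `A`), the category `C` is pointed, with
`⊥_A : I ⟶ A` given by `σ_{ε_A} ∘ γ_I`, where `γ_I : I ⟶ Ω_I` is the anamorphism
into the final coalgebra carrier of `!(−)` (at unit parameter) determined by the
lift coalgebra structure `lift_I : I ⟶ !I`, and `σ_{ε_A} : Ω_I ⟶ A` is the
catamorphism for the `!`-algebra `ε_A : !A ⟶ A`.  In particular `h ∘ ⊥_A = ⊥_B`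
for every `h : A ⟶ B`. -/
theorem stmt15 {V : Type*} [Category V] [CartesianMonoidalCategory V] [MonoidalClosed V]
    {C : Type*} [Category C] [MonoidalCategory C] [SymmetricCategory C] [MonoidalClosed C]
    (F : V ⥤ C) (G : C ⥤ V) [F.Braided] [G.LaxMonoidal] (adj : F ⊣ G) [adj.IsMonoidal]
    -- parametric algebraic compactness of ! = F ∘ G
    (hcompact : ∀ A : C, AlgebraicallyCompact ((G ⋙ F) ⋙ tensorLeft A))
    -- the initial algebra Ω_I of !(−) (at unit parameter), with invertible structure map
    (Ω : Endofunctor.Algebra (G ⋙ F)) (hinit : IsInitial Ω)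
    (s : Ω.a ⟶ (G ⋙ F).obj Ω.a) (hs : Ω.str ≫ s = 𝟙 _) (hs' : s ≫ Ω.str = 𝟙 _)
    (hterm : IsTerminal (Endofunctor.Coalgebra.mk Ω.a s : Endofunctor.Coalgebra (G ⋙ F)))
    -- the lift coalgebra structure on the unit: I ≅ F1 → F(GF1) → F(G(I)) = !I
    (liftI : 𝟙_ C ⟶ (G ⋙ F).obj (𝟙_ C))
    (hliftI : liftI = LaxMonoidal.ε F ≫ F.map (adj.unit.app (𝟙_ V)) ≫
      F.map (G.map (OplaxMonoidal.η F)))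
    -- the anamorphism γ_I and the catamorphisms σ_{ε_A}
    (γ : 𝟙_ C ⟶ Ω.a)
    (hγ : γ = (hterm.from (Endofunctor.Coalgebra.mk (𝟙_ C) liftI)).f)
    (σ : ∀ A : C, Ω.a ⟶ A)
    (hσ : ∀ A : C, σ A = (hinit.to (Endofunctor.Algebra.mk A (adj.counit.app A))).f)
    (bot : ∀ A : C, 𝟙_ C ⟶ A) (hbot : ∀ A : C, bot A = γ ≫ σ A) :
    ∀ {A B : C} (h : A ⟶ B), bot A ≫ h = bot B := by
  intro A B h
  have hσh : σ A ≫ h = σ B := by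
    have hA := (hinit.to (Endofunctor.Algebra.mk A (adj.counit.app A))).h
    let m : Ω ⟶ Endofunctor.Algebra.mk B (adj.counit.app B) :=
      { f := σ A ≫ h
        h := by
          have hA' : F.map (G.map (hinit.to
              (Endofunctor.Algebra.mk A (adj.counit.app A))).f) ≫ adj.counit.app A =
              Ω.str ≫ (hinit.to (Endofunctor.Algebra.mk A (adj.counit.app A))).f := by
            simpa using hA
          dsimp
          rw [hσ A]
          simp only [Functor.map_comp, Category.assoc]
          have hnat : F.map (G.map h) ≫ adj.counit.app B = adj.counit.app A ≫ h :=
            adj.counit.naturality h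
          rw [hnat, reassoc_of% hA'] }
    have := congrArg Endofunctor.Algebra.Hom.f
      (hinit.hom_ext m (hinit.to (Endofunctor.Algebra.mk B (adj.counit.app B))))
    simpa [m, hσ B] using this
  rw [hbot A, hbot B, Category.assoc, hσh]
end
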